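/- arXiv:2002.08693 — 2 statements merged into one kernel-verified Lean document; each statement's English description precedes it below -/
import Mathlib

section
/- Let P be a finite set of n points in ℝ² in general position. Then there exist two points p₁, p₂ ∈ ℝ² such that every axis-parallel box containing more than (3/7)·n points of P contains at least one of p₁, p₂, and every axis-parallel box containing more than (4/7)·n points of P contains both p₁ and p₂. -/
/-!
A box missing a point `z` lies in one of the four open half-planes bounded by the axis-parallel
lines through `z`. It therefore suffices that every such half-plane at `p₁` or at `p₂` holds at
most `4n/7` points, and every intersection of a half-plane at `p₁` with one at `p₂` at most `3n/7`.

Put `p₁` on a horizontal line with at most `3n/7` points below it and `4n/7` above, and `p₂` on one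
with at most `4n/7` below and `3n/7` above. The abscissa of `p₁` must split the points below `p₂`,
and that of `p₂` the points above `p₁`, into parts of at most `3n/7`; moreover one abscissa must
have at most `3n/7` points to its left and one at most `3n/7` to its right. The values admissible
for each such constraint form a half-line, so by Helly's theorem for half-lines it is enough to
meet the constraints pairwise, and that is a counting argument.
-/

/-- `B` is a compact axis-parallel box in `ℝ²`: a product of closed intervals. -/
def IsBox (B : Set (EuclideanSpace ℝ (Fin 2))) : Prop :=
  ∃ a b : Fin 2 → ℝ, B = {x | ∀ i, x i ∈ Set.Icc (a i) (b i)}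

/-- Number of points of the finite set `P` lying in the set `C`. -/
noncomputable def ptsIn (P : Finset (EuclideanSpace ℝ (Fin 2)))
    (C : Set (EuclideanSpace ℝ (Fin 2))) : ℕ :=
  ((P : Set (EuclideanSpace ℝ (Fin 2))) ∩ C).ncard

/-- General position with respect to axis-parallel boxes: distinct points of `P`
differ in every coordinate. -/
def GeneralPositionBoxes (P : Finset (EuclideanSpace ℝ (Fin 2))) : Prop :=
  ∀ p ∈ P, ∀ q ∈ P, p ≠ q → ∀ i, p i ≠ q i

open Finset

/-- Helly's theorem for half-lines: in a linear order lower sets, and upper sets, are nested. -/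
theorem inter_nonempty_of_isLowerSet_of_isUpperSet {β : Type*} [LinearOrder β]
    {D₁ D₂ U₁ U₂ : Set β} (hD₁ : IsLowerSet D₁) (hD₂ : IsLowerSet D₂) (hU₁ : IsUpperSet U₁)
    (hU₂ : IsUpperSet U₂) (h₁₁ : (D₁ ∩ U₁).Nonempty) (h₁₂ : (D₁ ∩ U₂).Nonempty)
    (h₂₁ : (D₂ ∩ U₁).Nonempty) (h₂₂ : (D₂ ∩ U₂).Nonempty) : (D₁ ∩ D₂ ∩ (U₁ ∩ U₂)).Nonempty := by
  rcases hD₁.total hD₂ with hD | hD <;> rcases hU₁.total hU₂ with hU | hU <;>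
    simp only [Set.inter_eq_left.2, Set.inter_eq_right.2, hD, hU] <;> assumption

section Thresholds

variable {α : Type*} (f : α → ℝ)

def fewBelow (S : Finset α) (j : ℕ) : Set ℝ := {t | #{x ∈ S | f x < t} ≤ j}

def fewAbove (S : Finset α) (k : ℕ) : Set ℝ := {t | #{x ∈ S | t < f x} ≤ k}

variable {f} {S T : Finset α} {j k : ℕ}

theorem isLowerSet_fewBelow : IsLowerSet (fewBelow f S j) := fun _ _ hst hs =>
  (card_le_card (monotone_filter_right _ fun _ _ hx => hx.trans_le hst)).trans hs

theorem isUpperSet_fewAbove : IsUpperSet (fewAbove f S k) := fun _ _ hst hs =>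
  (card_le_card (monotone_filter_right _ fun _ _ hx => hst.trans_lt hx)).trans hs

theorem fewBelow_mono (h : j ≤ k) : fewBelow f S j ⊆ fewBelow f S k := fun _ ht => ht.trans h

theorem fewAbove_mono (h : j ≤ k) : fewAbove f S j ⊆ fewAbove f S k := fun _ ht => ht.trans h

theorem fewBelow_anti (h : S ⊆ T) : fewBelow f T j ⊆ fewBelow f S j := fun _ ht =>
  (card_le_card (filter_subset_filter _ h)).trans ht

theorem fewAbove_anti (h : S ⊆ T) : fewAbove f T k ⊆ fewAbove f S k := fun _ ht =>
  (card_le_card (filter_subset_filter _ h)).trans ht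

/-- The witness is the largest value `f w` with at most `j` values of `S` below it. -/
theorem fewBelow_inter_fewAbove_nonempty (hS : #S ≤ j + k + 1) :
    (fewBelow f S j ∩ fewAbove f S k).Nonempty := by
  rcases S.eq_empty_or_nonempty with rfl | hne
  · exact ⟨0, by simp [fewBelow, fewAbove]⟩
  obtain ⟨a, ha, ha_min⟩ := S.exists_min_image f hne
  have hW : {x ∈ S | #{y ∈ S | f y < f x} ≤ j}.Nonempty :=
    ⟨a, mem_filter.2 ⟨ha, by simp [filter_eq_empty_iff.2 fun y hy => not_lt.2 (ha_min y hy)]⟩⟩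
  obtain ⟨w, hw, hw_max⟩ := exists_max_image _ f hW
  refine ⟨f w, (mem_filter.1 hw).2, ?_⟩
  by_contra hk
  replace hk : k < #{x ∈ S | f w < f x} := not_le.1 hk
  obtain ⟨u, hu, hu_min⟩ := exists_min_image {x ∈ S | f w < f x} f (card_pos.1 (by omega))
  rw [mem_filter] at hu
  have hu_many : j < #{y ∈ S | f y < f u} := by
    by_contra h
    exact (hu.2.trans_le (hw_max u (mem_filter.2 ⟨hu.1, not_lt.1 h⟩))).false
  have hsub : {y ∈ S | f y < f u} ⊆ {y ∈ S | f y ≤ f w} := monotone_filter_right _ fun y hy hyu =>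
    not_lt.1 fun hwy => (hyu.trans_le (hu_min y (mem_filter.2 ⟨hy, hwy⟩))).false
  have hsplit := card_filter_add_card_filter_not (s := S) (fun y => f y ≤ f w)
  simp only [not_le] at hsplit
  have := card_le_card hsub
  omega

/-- For `s < t` this is inclusion–exclusion; for `t ≤ s` the strip is empty, so the truncated
subtraction does no harm. -/
theorem card_filter_lt_and_lt_le (S : Finset α) (s t : ℝ) :
    #{x ∈ S | s < f x ∧ f x < t} ≤ #{x ∈ S | s < f x} + #{x ∈ S | f x < t} - #S := by
  classical
  rcases lt_or_ge s t with hst | hts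
  · have hcover : {x ∈ S | s < f x} ∪ {x ∈ S | f x < t} = S := by
      rw [← filter_or, filter_true_of_mem fun x _ => lt_or_ge s (f x) |>.imp_right (·.trans_lt hst)]
    have := card_union_add_card_inter {x ∈ S | s < f x} {x ∈ S | f x < t}
    rw [hcover, ← filter_and] at this
    omega
  · rw [filter_false_of_mem fun x _ h => (h.1.trans h.2).not_ge hts, card_empty]
    exact Nat.zero_le _

theorem fewBelow_inter_fewAbove_nonempty_of_neg
    (h : (fewBelow (fun x => -f x) S j ∩ fewAbove (fun x => -f x) T k).Nonempty) :
    (fewBelow f T k ∩ fewAbove f S j).Nonempty := by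
  obtain ⟨t, h₁, h₂⟩ := h
  change #{x ∈ S | -f x < t} ≤ j at h₁
  change #{x ∈ T | t < -f x} ≤ k at h₂
  refine ⟨-t, ?_, ?_⟩
  · change #{x ∈ T | f x < -t} ≤ k
    simpa only [lt_neg] using h₂
  · change #{x ∈ S | -t < f x} ≤ j
    simpa only [neg_lt] using h₁

variable [DecidableEq α] {P S₁ S₂ : Finset α} {m : ℕ}

/-- Otherwise more than `m` points of each `Sᵢ` lie above the `(m+1)`-st smallest value of `P`,
which the bound on the overlap `S₁ ∩ S₂` forbids. -/
theorem nonempty_fewBelow_inter_fewAbove_or_of_card_inter_le (hS₁ : S₁ ⊆ P) (hS₂ : S₂ ⊆ P)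
    (h : #P + #(S₁ ∩ S₂) ≤ 3 * m + 2) :
    (fewBelow f P m ∩ fewAbove f S₁ m).Nonempty ∨ (fewBelow f P m ∩ fewAbove f S₂ m).Nonempty := by
  obtain ⟨t, htP, htP'⟩ :=
    fewBelow_inter_fewAbove_nonempty (f := f) (S := P) (j := m) (k := #P - m - 1) (by omega)
  refine or_iff_not_and_not.2 fun ⟨h₁, h₂⟩ => ?_
  have c₁ : m < #{x ∈ S₁ | t < f x} := not_le.1 fun h => h₁ ⟨t, htP, h⟩
  have c₂ : m < #{x ∈ S₂ | t < f x} := not_le.1 fun h => h₂ ⟨t, htP, h⟩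
  have hU := card_union_add_card_inter {x ∈ S₁ | t < f x} {x ∈ S₂ | t < f x}
  rw [← filter_union, ← filter_inter_distrib] at hU
  have := card_le_card (filter_subset_filter (fun x => t < f x) (union_subset hS₁ hS₂))
  have := card_le_card (filter_subset (fun x => t < f x) (S₁ ∩ S₂))
  have := card_le_card (inter_subset_left.trans hS₁ : S₁ ∩ S₂ ⊆ P)
  change #{x ∈ P | t < f x} ≤ #P - m - 1 at htP'
  omega

theorem nonempty_fewBelow_inter_fewAbove_or_of_card_inter_le' (hS₁ : S₁ ⊆ P) (hS₂ : S₂ ⊆ P)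
    (h : #P + #(S₁ ∩ S₂) ≤ 3 * m + 2) :
    (fewBelow f S₁ m ∩ fewAbove f P m).Nonempty ∨ (fewBelow f S₂ m ∩ fewAbove f P m).Nonempty :=
  (nonempty_fewBelow_inter_fewAbove_or_of_card_inter_le hS₁ hS₂ h).imp
    fewBelow_inter_fewAbove_nonempty_of_neg fewBelow_inter_fewAbove_nonempty_of_neg

/-- Otherwise more than `m` points of `S` lie above the `(m+1)`-st smallest value of `P` and more
than `m` below the `(m+1)`-st largest one, while at most `#P - 2m - 2` points lie in between. -/
theorem nonempty_fewBelow_inter_fewAbove_or_of_subset (hS : S ⊆ P) (h₁ : #S ≤ 2 * m + 1)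
    (h₂ : #P + #S ≤ 4 * m + 3) :
    (fewBelow f P m ∩ fewAbove f S m).Nonempty ∨ (fewBelow f S m ∩ fewAbove f P m).Nonempty := by
  obtain ⟨t₁, ht₁, ht₁'⟩ :=
    fewBelow_inter_fewAbove_nonempty (f := f) (S := P) (j := m) (k := #P - m - 1) (by omega)
  obtain ⟨t₂, ht₂', ht₂⟩ :=
    fewBelow_inter_fewAbove_nonempty (f := f) (S := P) (j := #P - m - 1) (k := m) (by omega)
  refine or_iff_not_and_not.2 fun ⟨ha, hb⟩ => ?_
  have c₁ : m < #{x ∈ S | t₁ < f x} := not_le.1 fun h => ha ⟨t₁, ht₁, h⟩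
  have c₂ : m < #{x ∈ S | f x < t₂} := not_le.1 fun h => hb ⟨t₂, h, ht₂⟩
  have hU := card_union_add_card_inter {x ∈ S | t₁ < f x} {x ∈ S | f x < t₂}
  rw [← filter_or, ← filter_and] at hU
  have := card_le_card (filter_subset (fun x => t₁ < f x ∨ f x < t₂) S)
  have := card_le_card (filter_subset_filter (fun x => t₁ < f x ∧ f x < t₂) hS)
  have := card_filter_lt_and_lt_le (f := f) P t₁ t₂
  change #{x ∈ P | t₁ < f x} ≤ #P - m - 1 at ht₁'
  change #{x ∈ P | f x < t₂} ≤ #P - m - 1 at ht₂'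
  omega

theorem exists_two_medians {M : ℕ} (hS₁ : S₁ ⊆ P) (hS₂ : S₂ ⊆ P) (hS₁M : #S₁ ≤ M)
    (hS₂M : #S₂ ≤ M) (hmid : #P + #(S₁ ∩ S₂) ≤ 3 * m + 2) (hP : #P ≤ m + M + 1) (hmM : m ≤ M)
    (hM : M ≤ 2 * m + 1) (hPM : #P + M ≤ 4 * m + 3) :
    ∃ x₁ x₂ : ℝ,
      x₁ ∈ fewBelow f P M ∩ fewAbove f P M ∩ (fewBelow f S₂ m ∩ fewAbove f S₂ m) ∧
      x₂ ∈ fewBelow f P M ∩ fewAbove f P M ∩ (fewBelow f S₁ m ∩ fewAbove f S₁ m) ∧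
      (x₁ ∈ fewBelow f P m ∨ x₂ ∈ fewBelow f P m) ∧
      (x₁ ∈ fewAbove f P m ∨ x₂ ∈ fewAbove f P m) := by
  have median {S : Finset α} {j k : ℕ} (hS : #S ≤ M) (hP : #P ≤ j + k + 1)
      (hj : (fewBelow f P j ∩ fewAbove f S m).Nonempty)
      (hk : (fewBelow f S m ∩ fewAbove f P k).Nonempty) :
      (fewBelow f P j ∩ fewBelow f S m ∩ (fewAbove f P k ∩ fewAbove f S m)).Nonempty :=
    inter_nonempty_of_isLowerSet_of_isUpperSet isLowerSet_fewBelow isLowerSet_fewBelow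
      isUpperSet_fewAbove isUpperSet_fewAbove (fewBelow_inter_fewAbove_nonempty hP) hj hk
      (fewBelow_inter_fewAbove_nonempty (by omega))
  have below {S : Finset α} (hS : S ⊆ P) : (fewBelow f S m ∩ fewAbove f P M).Nonempty :=
    (fewBelow_inter_fewAbove_nonempty hP).mono (Set.inter_subset_inter_left _ (fewBelow_anti hS))
  have above {S : Finset α} (hS : S ⊆ P) : (fewBelow f P M ∩ fewAbove f S m).Nonempty :=
    (fewBelow_inter_fewAbove_nonempty (by omega)).mono
      (Set.inter_subset_inter_right _ (fewAbove_anti hS))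
  have hleft := nonempty_fewBelow_inter_fewAbove_or_of_card_inter_le (f := f) hS₁ hS₂ hmid
  have hright := nonempty_fewBelow_inter_fewAbove_or_of_card_inter_le' (f := f) hS₁ hS₂ hmid
  have h₁ := nonempty_fewBelow_inter_fewAbove_or_of_subset (f := f) hS₁ (m := m) (by omega)
    (by omega)
  have h₂ := nonempty_fewBelow_inter_fewAbove_or_of_subset (f := f) hS₂ (m := m) (by omega)
    (by omega)
  -- `x₁` can take the left constraint and `x₂` the right one, or the other way round.
  obtain ⟨ha, hb⟩ | ⟨ha, hb⟩ :
      (fewBelow f P m ∩ fewAbove f S₂ m).Nonempty ∧ (fewBelow f S₁ m ∩ fewAbove f P m).Nonempty ∨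
      (fewBelow f P m ∩ fewAbove f S₁ m).Nonempty ∧ (fewBelow f S₂ m ∩ fewAbove f P m).Nonempty := by
    tauto
  · obtain ⟨x₁, ⟨h₁P, h₁S⟩, h₁P', h₁S'⟩ := median hS₂M hP ha (below hS₂)
    obtain ⟨x₂, ⟨h₂P, h₂S⟩, h₂P', h₂S'⟩ := median hS₁M (by omega) (above hS₁) hb
    exact ⟨x₁, x₂, ⟨⟨fewBelow_mono hmM h₁P, h₁P'⟩, h₁S, h₁S'⟩,
      ⟨⟨h₂P, fewAbove_mono hmM h₂P'⟩, h₂S, h₂S'⟩, .inl h₁P, .inr h₂P'⟩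
  · obtain ⟨x₂, ⟨h₂P, h₂S⟩, h₂P', h₂S'⟩ := median hS₁M hP ha (below hS₁)
    obtain ⟨x₁, ⟨h₁P, h₁S⟩, h₁P', h₁S'⟩ := median hS₂M (by omega) (above hS₂) hb
    exact ⟨x₁, x₂, ⟨⟨h₁P, fewAbove_mono hmM h₁P'⟩, h₁S, h₁S'⟩,
      ⟨⟨fewBelow_mono hmM h₂P, h₂P'⟩, h₂S, h₂S'⟩, .inr h₂P, .inl h₁P'⟩

end Thresholds

local notation "ℝ²" => EuclideanSpace ℝ (Fin 2)

def openHalfplanes (z : ℝ²) : Set (Set ℝ²) :=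
  {{x | x 0 < z 0}, {x | z 0 < x 0}, {x | x 1 < z 1}, {x | z 1 < x 1}}

section Plane

variable {P : Finset ℝ²} {B : Set ℝ²} {z z₁ z₂ : ℝ²} {i : Fin 2} {t : ℝ} {k m M : ℕ}

theorem ptsIn_mono (P : Finset ℝ²) {C D : Set ℝ²} (h : C ⊆ D) : ptsIn P C ≤ ptsIn P D :=
  Set.ncard_le_ncard (Set.inter_subset_inter_right _ h) (P.finite_toSet.inter_of_left _)

theorem ptsIn_setOf (P : Finset ℝ²) (p : ℝ² → Prop) [DecidablePred p] :
    ptsIn P {x | p x} = #{x ∈ P | p x} := by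
  rw [ptsIn, ← Set.ncard_coe_finset]
  congr 1
  ext
  simp

theorem ptsIn_setOf_inter_setOf (P : Finset ℝ²) (p q : ℝ² → Prop) [DecidablePred p]
    [DecidablePred q] : ptsIn P ({x | p x} ∩ {x | q x}) = #{x ∈ {x ∈ P | p x} | q x} := by
  rw [← Set.ofPred_and, ptsIn_setOf, filter_filter]

theorem ptsIn_setOf_lt_le (h : t ∈ fewBelow (· i) P k) : ptsIn P {x | x i < t} ≤ k :=
  (ptsIn_setOf P _).trans_le h

theorem ptsIn_setOf_gt_le (h : t ∈ fewAbove (· i) P k) : ptsIn P {x | t < x i} ≤ k :=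
  (ptsIn_setOf P _).trans_le h

theorem ptsIn_strip_le {s : ℝ} (hs : s ∈ fewAbove (· i) P M) (ht : t ∈ fewBelow (· i) P M)
    (hM : 2 * M ≤ #P + m) : ptsIn P ({x | s < x i} ∩ {x | x i < t}) ≤ m := by
  change #{x ∈ P | s < x i} ≤ M at hs
  change #{x ∈ P | x i < t} ≤ M at ht
  rw [← Set.ofPred_and, ptsIn_setOf]
  have := card_filter_lt_and_lt_le (f := (· i)) P s t
  omega

theorem IsBox.exists_openHalfplane_superset (hB : IsBox B) (hz : z ∉ B) :
    ∃ H ∈ openHalfplanes z, B ⊆ H := by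
  obtain ⟨a, b, rfl⟩ := hB
  simp only [Set.mem_ofPred_eq, Fin.forall_fin_two, Set.mem_Icc, not_and_or, not_le] at hz
  rcases hz with (h | h) | (h | h)
  · exact ⟨_, .inr (.inl rfl), fun x hx => h.trans_le (hx 0).1⟩
  · exact ⟨_, .inl rfl, fun x hx => (hx 0).2.trans_lt h⟩
  · exact ⟨_, .inr (.inr (.inr rfl)), fun x hx => h.trans_le (hx 1).1⟩
  · exact ⟨_, .inr (.inr (.inl rfl)), fun x hx => (hx 1).2.trans_lt h⟩

theorem IsBox.mem_of_ptsIn_openHalfplanes_le (hB : IsBox B)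
    (hz : ∀ H ∈ openHalfplanes z, ptsIn P H ≤ k) (hk : k < ptsIn P B) : z ∈ B := by
  by_contra hzB
  obtain ⟨H, hH, hBH⟩ := hB.exists_openHalfplane_superset hzB
  exact (hk.trans_le ((ptsIn_mono P hBH).trans (hz H hH))).false

theorem IsBox.mem_or_mem_of_ptsIn_inter_le (hB : IsBox B)
    (h : ∀ H₁ ∈ openHalfplanes z₁, ∀ H₂ ∈ openHalfplanes z₂, ptsIn P (H₁ ∩ H₂) ≤ k)
    (hk : k < ptsIn P B) : z₁ ∈ B ∨ z₂ ∈ B := by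
  by_contra! hz
  obtain ⟨H₁, hH₁, hBH₁⟩ := hB.exists_openHalfplane_superset hz.1
  obtain ⟨H₂, hH₂, hBH₂⟩ := hB.exists_openHalfplane_superset hz.2
  exact (hk.trans_le ((ptsIn_mono P (Set.subset_inter hBH₁ hBH₂)).trans (h H₁ hH₁ H₂ hH₂))).false

theorem ptsIn_openHalfplanes_le (hx : z 0 ∈ fewBelow (· 0) P M ∩ fewAbove (· 0) P M)
    (hy : z 1 ∈ fewBelow (· 1) P M ∩ fewAbove (· 1) P M) :
    ∀ H ∈ openHalfplanes z, ptsIn P H ≤ M := by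
  rintro _ (rfl | rfl | rfl | rfl)
  exacts [ptsIn_setOf_lt_le hx.1, ptsIn_setOf_gt_le hx.2, ptsIn_setOf_lt_le hy.1,
    ptsIn_setOf_gt_le hy.2]

theorem ptsIn_openHalfplane_inter_le (hM : 2 * M ≤ #P + m)
    (hy₁ : z₁ 1 ∈ fewBelow (· 1) P m ∩ fewAbove (· 1) P M)
    (hy₂ : z₂ 1 ∈ fewBelow (· 1) P M ∩ fewAbove (· 1) P m)
    (hx₁ : z₁ 0 ∈ fewBelow (· 0) P M ∩ fewAbove (· 0) P M ∩
      (fewBelow (· 0) {x ∈ P | x 1 < z₂ 1} m ∩ fewAbove (· 0) {x ∈ P | x 1 < z₂ 1} m))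
    (hx₂ : z₂ 0 ∈ fewBelow (· 0) P M ∩ fewAbove (· 0) P M ∩
      (fewBelow (· 0) {x ∈ P | z₁ 1 < x 1} m ∩ fewAbove (· 0) {x ∈ P | z₁ 1 < x 1} m))
    (hleft : z₁ 0 ∈ fewBelow (· 0) P m ∨ z₂ 0 ∈ fewBelow (· 0) P m)
    (hright : z₁ 0 ∈ fewAbove (· 0) P m ∨ z₂ 0 ∈ fewAbove (· 0) P m) :
    ∀ H₁ ∈ openHalfplanes z₁, ∀ H₂ ∈ openHalfplanes z₂, ptsIn P (H₁ ∩ H₂) ≤ m := by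
  have left {A C : Set ℝ²} (h : ptsIn P A ≤ m) : ptsIn P (A ∩ C) ≤ m :=
    (ptsIn_mono P Set.inter_subset_left).trans h
  have right {A C : Set ℝ²} (h : ptsIn P C ≤ m) : ptsIn P (A ∩ C) ≤ m :=
    (ptsIn_mono P Set.inter_subset_right).trans h
  -- `H₁`, and then `H₂`, run through the half-planes left of, right of, below and above the point.
  rintro _ (rfl | rfl | rfl | rfl) _ (rfl | rfl | rfl | rfl)
  · exact hleft.elim (left <| ptsIn_setOf_lt_le ·) (right <| ptsIn_setOf_lt_le ·)
  · exact Set.inter_comm _ _ ▸ ptsIn_strip_le hx₂.1.2 hx₁.1.1 hM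
  · exact Set.inter_comm _ _ ▸ (ptsIn_setOf_inter_setOf P _ _).trans_le hx₁.2.1
  · exact right (ptsIn_setOf_gt_le hy₂.2)
  · exact ptsIn_strip_le hx₁.1.2 hx₂.1.1 hM
  · exact hright.elim (left <| ptsIn_setOf_gt_le ·) (right <| ptsIn_setOf_gt_le ·)
  · exact Set.inter_comm _ _ ▸ (ptsIn_setOf_inter_setOf P _ _).trans_le hx₁.2.2
  · exact right (ptsIn_setOf_gt_le hy₂.2)
  iterate 4 exact left (ptsIn_setOf_lt_le hy₁.1)
  · exact (ptsIn_setOf_inter_setOf P _ _).trans_le hx₂.2.1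
  · exact (ptsIn_setOf_inter_setOf P _ _).trans_le hx₂.2.2
  · exact ptsIn_strip_le hy₁.2 hy₂.1 hM
  · exact right (ptsIn_setOf_gt_le hy₂.2)

end Plane

theorem Nat.div_lt_of_div_mul_lt {a b n c : ℕ} (h : (a / b : ℝ) * n < c) : a * n / b < c := by
  rw [← Nat.floor_div_eq_div (K := ℝ), Nat.floor_lt (by positivity)]
  push_cast
  rwa [mul_div_right_comm]

theorem weighted_net_boxes_two_dim_general (P : Finset (EuclideanSpace ℝ (Fin 2)))
    (n : ℕ) (hn : P.card = n) :
    ∃ p₁ p₂ : EuclideanSpace ℝ (Fin 2),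
      (∀ B : Set (EuclideanSpace ℝ (Fin 2)), IsBox B →
        (ptsIn P B : ℝ) > (3 / 7) * n → p₁ ∈ B ∨ p₂ ∈ B) ∧
      (∀ B : Set (EuclideanSpace ℝ (Fin 2)), IsBox B →
        (ptsIn P B : ℝ) > (4 / 7) * n → p₁ ∈ B ∧ p₂ ∈ B) := by
  classical
  obtain ⟨m, hm⟩ : ∃ m, m = 3 * n / 7 := ⟨_, rfl⟩
  obtain ⟨M, hM⟩ : ∃ M, M = 4 * n / 7 := ⟨_, rfl⟩
  obtain ⟨y₁, hy₁⟩ := fewBelow_inter_fewAbove_nonempty (f := (· 1)) (S := P) (j := m) (k := M)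
    (by omega)
  obtain ⟨y₂, hy₂⟩ := fewBelow_inter_fewAbove_nonempty (f := (· 1)) (S := P) (j := M) (k := m)
    (by omega)
  have hmid : #P + #({x ∈ P | y₁ < x 1} ∩ {x ∈ P | x 1 < y₂}) ≤ 3 * m + 2 := by
    have h₁ : #{x ∈ P | y₁ < x 1} ≤ M := hy₁.2
    have h₂ : #{x ∈ P | x 1 < y₂} ≤ M := hy₂.1
    rw [← filter_and]
    have := card_filter_lt_and_lt_le (f := (· 1)) P y₁ y₂
    omega
  obtain ⟨x₁, x₂, hx₁, hx₂, hleft, hright⟩ := exists_two_medians (f := (· 0))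
    (S₁ := {x ∈ P | y₁ < x 1}) (S₂ := {x ∈ P | x 1 < y₂}) (filter_subset _ P) (filter_subset _ P)
    hy₁.2 hy₂.1 hmid (by omega) (by omega) (by omega) (by omega)
  refine ⟨!₂[x₁, y₁], !₂[x₂, y₂], fun B hB hB₃ => ?_, fun B hB hB₄ => ?_⟩
  · exact hB.mem_or_mem_of_ptsIn_inter_le
      (ptsIn_openHalfplane_inter_le (by omega) hy₁ hy₂ hx₁ hx₂ hleft hright)
      (hm ▸ Nat.div_lt_of_div_mul_lt (by exact_mod_cast hB₃))
  · have hB₄' : M < ptsIn P B := hM ▸ Nat.div_lt_of_div_mul_lt (by exact_mod_cast hB₄)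
    exact ⟨hB.mem_of_ptsIn_openHalfplanes_le
        (ptsIn_openHalfplanes_le hx₁.1 ⟨fewBelow_mono (by omega) hy₁.1, hy₁.2⟩) hB₄',
      hB.mem_of_ptsIn_openHalfplanes_le
        (ptsIn_openHalfplanes_le hx₂.1 ⟨hy₂.1, fewAbove_mono (by omega) hy₂.2⟩) hB₄'⟩

/-- weighted (3/7, 4/7)-net of size 2 for axis-parallel boxes in the
plane. -/
theorem weighted_net_boxes_two_dim (P : Finset (EuclideanSpace ℝ (Fin 2)))
    (n : ℕ) (hn : P.card = n) (hgp : GeneralPositionBoxes P) :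
    ∃ p₁ p₂ : EuclideanSpace ℝ (Fin 2),
      (∀ B : Set (EuclideanSpace ℝ (Fin 2)), IsBox B →
        (ptsIn P B : ℝ) > (3 / 7) * n → p₁ ∈ B ∨ p₂ ∈ B) ∧
      (∀ B : Set (EuclideanSpace ℝ (Fin 2)), IsBox B →
        (ptsIn P B : ℝ) > (4 / 7) * n → p₁ ∈ B ∧ p₂ ∈ B) :=
  weighted_net_boxes_two_dim_general P n hn
end

section
/- Let P be a finite set of n points in ℝ² and let l₁ be a horizontal line and l₂ a vertical line, each halving P (at most n/2 points strictly on each side). Then among the four closed quadrants determined by l₁ and l₂, there exist two opposite quadrants each containing at least n/4 points of P. -/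
section ptsIn

variable (P : Finset (EuclideanSpace ℝ (Fin 2)))

theorem ptsIn_univ : ptsIn P Set.univ = P.card := by
  rw [ptsIn, Set.inter_univ, Set.ncard_coe_finset]

theorem ptsIn_union_le (C D : Set (EuclideanSpace ℝ (Fin 2))) :
    ptsIn P (C ∪ D) ≤ ptsIn P C + ptsIn P D := by
  rw [ptsIn, Set.inter_union_distrib_left]
  exact Set.ncard_union_le _ _

theorem card_le_ptsIn_add_ptsIn_add_ptsIn {C D E : Set (EuclideanSpace ℝ (Fin 2))}
    (hcover : ∀ x, x ∈ C ∨ x ∈ D ∨ x ∈ E) :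
    P.card ≤ ptsIn P C + ptsIn P D + ptsIn P E := by
  have huniv : C ∪ (D ∪ E) = Set.univ := Set.eq_univ_of_forall hcover
  calc P.card = ptsIn P (C ∪ (D ∪ E)) := by rw [huniv, ptsIn_univ]
    _ ≤ ptsIn P C + ptsIn P (D ∪ E) := ptsIn_union_le P _ _
    _ ≤ ptsIn P C + ptsIn P D + ptsIn P E := by
      rw [add_assoc]; exact Nat.add_le_add_left (ptsIn_union_le P D E) _

end ptsIn

theorem opposite_ge_quarter_of_adjacent_ge_half {K : Type*} [Field K] [LinearOrder K]
    [IsStrictOrderedRing K] {n ul ur ll lr : K}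
    (hleft : n / 2 ≤ ul + ll) (htop : n / 2 ≤ ul + ur)
    (hright : n / 2 ≤ ur + lr) (hbottom : n / 2 ≤ ll + lr) :
    (ul ≥ n / 4 ∧ lr ≥ n / 4) ∨ (ur ≥ n / 4 ∧ ll ≥ n / 4) := by
  by_cases hul : ul < n / 4
  · right; constructor <;> linarith
  by_cases hlr : lr < n / 4
  · right; constructor <;> linarith
  · left; constructor <;> linarith

/-- if the vertical line `x = a` and the horizontal line `y = b`
each halve `P` (at most `n/2` points strictly on each side), then two opposite
closed quadrants each contain at least `n/4` points of `P`. -/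
theorem opposite_quadrants (P : Finset (EuclideanSpace ℝ (Fin 2)))
    (n : ℕ) (hn : P.card = n) (a b : ℝ)
    (hL : (ptsIn P {x | x 0 < a} : ℝ) ≤ n / 2)
    (hR : (ptsIn P {x | x 0 > a} : ℝ) ≤ n / 2)
    (hB : (ptsIn P {x | x 1 < b} : ℝ) ≤ n / 2)
    (hT : (ptsIn P {x | x 1 > b} : ℝ) ≤ n / 2) :
    ((ptsIn P {x | x 0 ≤ a ∧ x 1 ≥ b} : ℝ) ≥ n / 4 ∧
      (ptsIn P {x | x 0 ≥ a ∧ x 1 ≤ b} : ℝ) ≥ n / 4) ∨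
    ((ptsIn P {x | x 0 ≥ a ∧ x 1 ≥ b} : ℝ) ≥ n / 4 ∧
      (ptsIn P {x | x 0 ≤ a ∧ x 1 ≤ b} : ℝ) ≥ n / 4) := by
  have cover : ∀ {C D E : Set (EuclideanSpace ℝ (Fin 2))}, (∀ x, x ∈ C ∨ x ∈ D ∨ x ∈ E) →
      (n : ℝ) ≤ ptsIn P C + ptsIn P D + ptsIn P E := fun hcover => by
    exact_mod_cast hn ▸ card_le_ptsIn_add_ptsIn_add_ptsIn P hcover
  refine opposite_ge_quarter_of_adjacent_ge_half ?_ ?_ ?_ ?_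
  · linarith [cover (C := {x | x 0 > a}) (D := {x | x 0 ≤ a ∧ x 1 ≥ b})
      (E := {x | x 0 ≤ a ∧ x 1 ≤ b}) fun x => by grind]
  · linarith [cover (C := {x | x 1 < b}) (D := {x | x 0 ≤ a ∧ x 1 ≥ b})
      (E := {x | x 0 ≥ a ∧ x 1 ≥ b}) fun x => by grind]
  · linarith [cover (C := {x | x 0 < a}) (D := {x | x 0 ≥ a ∧ x 1 ≥ b})
      (E := {x | x 0 ≥ a ∧ x 1 ≤ b}) fun x => by grind]
  · linarith [cover (C := {x | x 1 > b}) (D := {x | x 0 ≤ a ∧ x 1 ≤ b})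
      (E := {x | x 0 ≥ a ∧ x 1 ≤ b}) fun x => by grind]
end
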